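/- arXiv:2306.10313 — 5 statements merged into one kernel-verified Lean document; each statement's English description precedes it below -/
import Mathlib

section
/- Let A ∈ ℝ^{n×n} be symmetric positive semidefinite with A·1 = 0. Let c ∈ [0,1), let ε ∈ [−c, 1−c]^n, and set s₀ = c·1 + ε. Let 1 ≤ k ≤ n and γ₁, γ₂, γ₃ ∈ (0,1). Assume that for every subset X ⊆ {1,…,n} with |X| = k: (1) (s_X − s₀)^T A s₀ ≥ −γ₁ · s₀^T A s₀; (2) (ε|_X)^T A (ε|_X) ≤ γ₂ · s₀^T A s₀; and (3) |(ε|_X)^T A (1|_X)| ≤ γ₃ · s₀^T A s₀. Let β ∈ (0,1] and suppose ALG ⊆ {1,…,n} with |ALG| = k satisfies (1|_{ALG})^T A (1|_{ALG}) ≥ β · (1|_X)^T A (1|_X) for every X with |X| = k. Then for every X with |X| = k it holds that (s_{ALG})^T A (s_{ALG}) ≥ (1/4) · min{ β, (1 − 2γ₁ − 2(1−c)γ₃) / (1 + 2(1−c)γ₃ + γ₂) } · (s_X)^T A (s_X). -/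
/-!
Write `s_Y = s₀ + d_Y` with `d_Y = (1 - c)·1|_Y - ε|_Y` and `t = s₀ᵀ A s₀`. Expanding the quadratic
form, hypotheses (1)–(3) and the optimality of `ALG` give `s_ALGᵀ A s_ALG ≥ N t + β (1-c)² o_X`,
where `N = 1 - 2γ₁ - 2(1-c)γ₃` and `o_X = 1|_Xᵀ A 1|_X`. On the other side,
`(u + v)ᵀ A (u + v) ≤ 2 uᵀ A u + 2 vᵀ A v` and (2), (3) give `s_Xᵀ A s_X ≤ 2 (D t + (1-c)² o_X)`
with `D = 1 + 2(1-c)γ₃ + γ₂`. Comparing the two bounds term by term gives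
`2 s_ALGᵀ A s_ALG ≥ min β (N / D) · s_Xᵀ A s_X`.
-/

open Matrix

namespace Matrix

variable {ι : Type*} {A : Matrix ι ι ℝ}

lemma PosSemidef.isSymm [Fintype ι] (hA : A.PosSemidef) : A.IsSymm :=
  isHermitian_iff_isSymm.mp hA.isHermitian

variable [Fintype ι]

lemma IsSymm.dotProduct_mulVec_comm (hA : A.IsSymm) (u v : ι → ℝ) :
    u ⬝ᵥ A *ᵥ v = v ⬝ᵥ A *ᵥ u := by
  simpa [hA.eq] using dotProduct_transpose_mulVec A u v

lemma IsSymm.add_dotProduct_mulVec_add (hA : A.IsSymm) (u v : ι → ℝ) :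
    (u + v) ⬝ᵥ A *ᵥ (u + v) = u ⬝ᵥ A *ᵥ u + 2 * (v ⬝ᵥ A *ᵥ u) + v ⬝ᵥ A *ᵥ v := by
  simp only [mulVec_add, dotProduct_add, add_dotProduct, hA.dotProduct_mulVec_comm u v]
  ring

lemma IsSymm.smul_sub_dotProduct_mulVec_smul_sub (hA : A.IsSymm) (a : ℝ) (u v : ι → ℝ) :
    (a • u - v) ⬝ᵥ A *ᵥ (a • u - v) =
      a ^ 2 * (u ⬝ᵥ A *ᵥ u) - 2 * a * (v ⬝ᵥ A *ᵥ u) + v ⬝ᵥ A *ᵥ v := by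
  simp only [mulVec_sub, mulVec_smul, dotProduct_sub, sub_dotProduct, dotProduct_smul,
    smul_dotProduct, smul_eq_mul, hA.dotProduct_mulVec_comm u v]
  ring

lemma PosSemidef.dotProduct_mulVec_self_nonneg (hA : A.PosSemidef) (v : ι → ℝ) :
    0 ≤ v ⬝ᵥ A *ᵥ v := by
  simpa using hA.dotProduct_mulVec_nonneg v

lemma PosSemidef.add_dotProduct_mulVec_add_le (hA : A.PosSemidef) (u v : ι → ℝ) :
    (u + v) ⬝ᵥ A *ᵥ (u + v) ≤ 2 * (u ⬝ᵥ A *ᵥ u) + 2 * (v ⬝ᵥ A *ᵥ v) := by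
  have hdiff := hA.dotProduct_mulVec_self_nonneg (u + -v)
  rw [hA.isSymm.add_dotProduct_mulVec_add] at hdiff ⊢
  simp only [neg_dotProduct, mulVec_neg, dotProduct_neg, neg_neg] at hdiff
  linarith

end Matrix

lemma min_div_mul_le_two_mul {β N D t w p q : ℝ} (ht : 0 ≤ t) (hw : 0 ≤ w) (hD : 0 < D)
    (hp : 0 ≤ p) (hq : 0 ≤ q) (hlower : N * t + β * w ≤ p) (hupper : q ≤ 2 * (D * t + w)) :
    min β (N / D) * q ≤ 2 * p := by
  set m := min β (N / D)
  rcases le_or_gt m 0 with hm | hm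
  · linarith [mul_nonpos_of_nonpos_of_nonneg hm hq]
  have hmβ : m ≤ β := min_le_left _ _
  have hmD : m * D ≤ N := (le_div_iff₀ hD).mp (min_le_right _ _)
  calc m * q ≤ m * (2 * (D * t + w)) := mul_le_mul_of_nonneg_left hupper hm.le
    _ = 2 * ((m * D) * t + m * w) := by ring
    _ ≤ 2 * (N * t + β * w) := by gcongr
    _ ≤ 2 * p := by linarith

theorem stmt3_general (n k : ℕ) (A : Matrix (Fin n) (Fin n) ℝ)
    (hA : A.PosSemidef)
    (c : ℝ) (hc1 : c < 1)
    (ε : Fin n → ℝ)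
    (γ₁ γ₂ γ₃ : ℝ)
    (hγ₂ : γ₂ ∈ Set.Ioo (0 : ℝ) 1)
    (hγ₃ : γ₃ ∈ Set.Ioo (0 : ℝ) 1)
    (s₀ : Fin n → ℝ) (hs₀ : s₀ = fun i => c + ε i)
    (sX : Finset (Fin n) → Fin n → ℝ)
    (hsX : ∀ X i, sX X i = if i ∈ X then 1 else s₀ i)
    (restr : (Fin n → ℝ) → Finset (Fin n) → Fin n → ℝ)
    (hrestr : ∀ v X i, restr v X i = if i ∈ X then v i else 0)
    (h1 : ∀ X : Finset (Fin n), X.card = k →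
      (sX X - s₀) ⬝ᵥ A.mulVec s₀ ≥ -γ₁ * (s₀ ⬝ᵥ A.mulVec s₀))
    (h2 : ∀ X : Finset (Fin n), X.card = k →
      restr ε X ⬝ᵥ A.mulVec (restr ε X) ≤ γ₂ * (s₀ ⬝ᵥ A.mulVec s₀))
    (h3 : ∀ X : Finset (Fin n), X.card = k →
      |restr ε X ⬝ᵥ A.mulVec (restr (fun _ => 1) X)| ≤ γ₃ * (s₀ ⬝ᵥ A.mulVec s₀))
    (β : ℝ)
    (ALG : Finset (Fin n)) (hALG : ALG.card = k)
    (hALGopt : ∀ X : Finset (Fin n), X.card = k →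
      restr (fun _ => 1) ALG ⬝ᵥ A.mulVec (restr (fun _ => 1) ALG) ≥
        β * (restr (fun _ => 1) X ⬝ᵥ A.mulVec (restr (fun _ => 1) X))) :
    ∀ X : Finset (Fin n), X.card = k →
      sX ALG ⬝ᵥ A.mulVec (sX ALG) ≥
        (1 / 4) * min β ((1 - 2 * γ₁ - 2 * (1 - c) * γ₃) / (1 + 2 * (1 - c) * γ₃ + γ₂)) *
          (sX X ⬝ᵥ A.mulVec (sX X)) := by
  intro X hX
  have hsymm := hA.isSymm
  have hpsd := hA.dotProduct_mulVec_self_nonneg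
  have ha : 0 ≤ 1 - c := by linarith
  set t := s₀ ⬝ᵥ A *ᵥ s₀
  set one := restr fun _ => 1
  have hdiff : ∀ Y, sX Y - s₀ = (1 - c) • one Y - restr ε Y := fun Y => by
    funext i
    simp only [Pi.sub_apply, Pi.smul_apply, smul_eq_mul, one, hsX, hrestr, hs₀]
    split_ifs <;> ring
  have hsplit : ∀ Y, sX Y = s₀ + (sX Y - s₀) := fun Y => (add_sub_cancel s₀ (sX Y)).symm
  have hlower : (1 - 2 * γ₁ - 2 * (1 - c) * γ₃) * t + β * ((1 - c) ^ 2 * (one X ⬝ᵥ A *ᵥ one X))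
      ≤ sX ALG ⬝ᵥ A *ᵥ sX ALG := by
    rw [hsplit, hsymm.add_dotProduct_mulVec_add, hdiff,
      hsymm.smul_sub_dotProduct_mulVec_smul_sub, ← hdiff]
    linarith [h1 ALG hALG, mul_le_mul_of_nonneg_left (abs_le.mp (h3 ALG hALG)).2 ha,
      mul_le_mul_of_nonneg_left (hALGopt X hX) (sq_nonneg (1 - c)), hpsd (restr ε ALG)]
  have hupper : sX X ⬝ᵥ A *ᵥ sX X
      ≤ 2 * ((1 + 2 * (1 - c) * γ₃ + γ₂) * t + (1 - c) ^ 2 * (one X ⬝ᵥ A *ᵥ one X)) := by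
    rw [hsplit X]
    refine (hA.add_dotProduct_mulVec_add_le _ _).trans ?_
    rw [hdiff, hsymm.smul_sub_dotProduct_mulVec_smul_sub]
    linarith [mul_le_mul_of_nonneg_left (abs_le.mp (h3 X hX)).1 ha, h2 X hX]
  have hD : 0 < 1 + 2 * (1 - c) * γ₃ + γ₂ := by linarith [mul_nonneg ha hγ₃.1.le, hγ₂.1]
  have := min_div_mul_le_two_mul (hpsd s₀) (mul_nonneg (sq_nonneg _) (hpsd (one X))) hD
    (hpsd (sX ALG)) (hpsd (sX X)) hlower hupper
  linarith [hpsd (sX ALG)]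

theorem stmt3 (n k : ℕ) (A : Matrix (Fin n) (Fin n) ℝ)
    (hA : A.PosSemidef) (hA1 : A.mulVec (fun _ => (1 : ℝ)) = 0)
    (c : ℝ) (hc0 : 0 ≤ c) (hc1 : c < 1)
    (ε : Fin n → ℝ) (hε : ∀ i, -c ≤ ε i ∧ ε i ≤ 1 - c)
    (hk1 : 1 ≤ k) (hkn : k ≤ n)
    (γ₁ γ₂ γ₃ : ℝ)
    (hγ₁ : γ₁ ∈ Set.Ioo (0 : ℝ) 1) (hγ₂ : γ₂ ∈ Set.Ioo (0 : ℝ) 1)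
    (hγ₃ : γ₃ ∈ Set.Ioo (0 : ℝ) 1)
    (s₀ : Fin n → ℝ) (hs₀ : s₀ = fun i => c + ε i)
    (sX : Finset (Fin n) → Fin n → ℝ)
    (hsX : ∀ X i, sX X i = if i ∈ X then 1 else s₀ i)
    (restr : (Fin n → ℝ) → Finset (Fin n) → Fin n → ℝ)
    (hrestr : ∀ v X i, restr v X i = if i ∈ X then v i else 0)
    (h1 : ∀ X : Finset (Fin n), X.card = k →
      (sX X - s₀) ⬝ᵥ A.mulVec s₀ ≥ -γ₁ * (s₀ ⬝ᵥ A.mulVec s₀))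
    (h2 : ∀ X : Finset (Fin n), X.card = k →
      restr ε X ⬝ᵥ A.mulVec (restr ε X) ≤ γ₂ * (s₀ ⬝ᵥ A.mulVec s₀))
    (h3 : ∀ X : Finset (Fin n), X.card = k →
      |restr ε X ⬝ᵥ A.mulVec (restr (fun _ => 1) X)| ≤ γ₃ * (s₀ ⬝ᵥ A.mulVec s₀))
    (β : ℝ) (hβ0 : 0 < β) (hβ1 : β ≤ 1)
    (ALG : Finset (Fin n)) (hALG : ALG.card = k)
    (hALGopt : ∀ X : Finset (Fin n), X.card = k →
      restr (fun _ => 1) ALG ⬝ᵥ A.mulVec (restr (fun _ => 1) ALG) ≥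
        β * (restr (fun _ => 1) X ⬝ᵥ A.mulVec (restr (fun _ => 1) X))) :
    ∀ X : Finset (Fin n), X.card = k →
      sX ALG ⬝ᵥ A.mulVec (sX ALG) ≥
        (1 / 4) * min β ((1 - 2 * γ₁ - 2 * (1 - c) * γ₃) / (1 + 2 * (1 - c) * γ₃ + γ₂)) *
          (sX X ⬝ᵥ A.mulVec (sX X)) :=
  stmt3_general n k A hA c hc1 ε γ₁ γ₂ γ₃ hγ₂ hγ₃ s₀ hs₀ sX hsX restr hrestr h1 h2 h3 β ALG hALG
    hALGopt
end

section
/- Suppose A ∈ ℝ^{n×n} is a symmetric positive semidefinite matrix with 1^T A = 0^T, and let x ∈ {−1,1}^n. Set M = (1/4) x^T A x and S = {i ∈ {1,…,n} : x_i = 1}, and assume S is nonempty. Then there exists i ∈ S such that M − (1/4)(x − 2e_i)^T A (x − 2e_i) ≤ 2M/|S|; that is, changing x_i from 1 to −1 decreases the value (1/4) x^T A x by at most 2M/|S|. -/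
/-!
For symmetric `A`, flipping `x i` from `1` to `-1` lowers `¼ xᵀAx` by exactly `(Ax)ᵢ - Aᵢᵢ ≤ (Ax)ᵢ`.
Since `𝟙ᵀA = 0`, summing `(Ax)ᵢ` over `S` gives `½ (𝟙 + x)ᵀAx = ½ xᵀAx = 2M`, so by averaging
some `i ∈ S` has decrease at most `2M / |S|`.
-/

open Matrix BigOperators

namespace Matrix

variable {ι R : Type*} [Fintype ι] [DecidableEq ι]

theorem IsSymm.dotProduct_mulVec_sub_single [CommRing R] {A : Matrix ι ι R} (hA : A.IsSymm)
    (x : ι → R) (i : ι) (c : R) :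
    (x - Pi.single i c) ⬝ᵥ A *ᵥ (x - Pi.single i c) =
      x ⬝ᵥ A *ᵥ x - 2 * c * (A *ᵥ x) i + c * c * A i i := by
  have hcross : x ⬝ᵥ A *ᵥ Pi.single i c = (A *ᵥ x) i * c := by
    rw [dotProduct_mulVec, ← mulVec_transpose, hA.eq, dotProduct_single]
  have hdiag : (A *ᵥ Pi.single i c) i = A i i * c := dotProduct_single _ _ _
  rw [mulVec_sub, dotProduct_sub, sub_dotProduct, sub_dotProduct, hcross, single_dotProduct,
    single_dotProduct, hdiag]
  ring

end Matrix

theorem two_mul_sum_filter_eq_one {ι R : Type*} [Fintype ι] [CommRing R] [DecidableEq R]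
    {x : ι → R} (hx : ∀ i, x i = 1 ∨ x i = -1) (y : ι → R) :
    2 * ∑ i ∈ Finset.univ.filter (fun i => x i = 1), y i = ∑ i, y i + x ⬝ᵥ y := by
  rw [Finset.sum_filter, Finset.mul_sum, dotProduct, ← Finset.sum_add_distrib]
  refine Finset.sum_congr rfl fun i _ => ?_
  split_ifs with h
  · rw [h]; ring
  · rw [(hx i).resolve_left h]; ring

theorem stmt4 (n : ℕ) (A : Matrix (Fin n) (Fin n) ℝ)
    (hA : A.PosSemidef) (hA1 : (fun _ => (1 : ℝ)) ᵥ* A = 0)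
    (x : Fin n → ℝ) (hx : ∀ i, x i = 1 ∨ x i = -1)
    (M : ℝ) (hM : M = (1 / 4) * (x ⬝ᵥ A.mulVec x))
    (S : Finset (Fin n)) (hS : S = Finset.univ.filter (fun i => x i = 1))
    (hSne : S.Nonempty) :
    ∃ i ∈ S,
      M - (1 / 4) * ((x - 2 • Pi.single i 1) ⬝ᵥ A.mulVec (x - 2 • Pi.single i 1)) ≤
        2 * M / (S.card : ℝ) := by
  have hflip (i : Fin n) :
      M - (1 / 4) * ((x - 2 • Pi.single i 1) ⬝ᵥ A *ᵥ (x - 2 • Pi.single i 1)) =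
        (A *ᵥ x) i - A i i := by
    rw [← Pi.single_smul', nsmul_eq_mul, mul_one,
      (isHermitian_iff_isSymm.mp hA.1).dotProduct_mulVec_sub_single, hM]
    ring
  have hrow_sum : ∑ i, (A *ᵥ x) i = 0 := by
    rw [← one_dotProduct, dotProduct_mulVec]
    exact (congrArg (· ⬝ᵥ x) hA1).trans (zero_dotProduct x)
  have hsum : ∑ i ∈ S, (A *ᵥ x) i = 2 * M := by
    have := two_mul_sum_filter_eq_one hx (A *ᵥ x)
    rw [hrow_sum, ← hS] at this
    rw [hM]; linarith
  obtain ⟨i, hiS, hi⟩ : ∃ i ∈ S, (A *ᵥ x) i - A i i ≤ 2 * M / S.card := by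
    refine Finset.exists_le_of_expect_le hSne ?_
    rw [Finset.expect_eq_sum_div_card, Finset.sum_sub_distrib, hsum]
    gcongr
    exact sub_le_self _ (Finset.sum_nonneg fun i _ => hA.diag_nonneg)
  exact ⟨i, hiS, (hflip i).trans_le hi⟩
end

section
/- Suppose A ∈ ℝ^{n×n} is a symmetric positive semidefinite matrix with 1^T A = 0^T, and let x ∈ {−1,1}^n. Let M₀ = (1/4) x^T A x, let S₀ = {i : x_i = 1}, and assume |S₀| ≤ n/2. Let s, t ∈ (0, 1/2] be such that |S₀| = s·n and t·n is an integer. Then there exists a set T ⊆ {1,…,n} with |T| = t·n such that the cut value (1/4) y^T A y, where y_i = 1 for i ∈ T and y_i = −1 for i ∉ T, is at least ((1−t)² − 7(1−t)/n + 12/n²) / ((1−s)² + (1−s)/n) · M₀ if t > s, and at least (t² − t/n) / (s² − s/n) · M₀ if t < s. -/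
/-!
Since `A` is symmetric and `1ᵀ A = 0`, the cut value of the `±1` vector of `T` equals
`∑ i ∈ T, ∑ j ∈ T, A i j`, and it is unchanged when `T` is replaced by its complement.
Deleting a uniformly random element of a `k`-set `S` leaves on average `(k - 2) / k` of this
block sum plus a nonnegative diagonal term, so some deletion keeps at least that fraction;
iterating down to size `m` keeps the fraction `m (m - 1) / (k (k - 1))`. For `t < s` shrink `S₀`
to size `t n`; for `t > s` shrink the complement of `S₀` to size `(1 - t) n` and take the
complement. The factor obtained in the second case dominates the stated one.
-/

open Matrix Finset

theorem natCast_mul_sub_one_nonneg (k : ℕ) : (0 : ℝ) ≤ k * (k - 1) := by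
  rcases k with _ | k
  · simp
  · simp only [Nat.cast_succ, add_sub_cancel_right]
    positivity

namespace Matrix

variable {ι : Type*} {A : Matrix ι ι ℝ}

def blockSum (A : Matrix ι ι ℝ) (S : Finset ι) : ℝ := ∑ i ∈ S, ∑ j ∈ S, A i j

theorem blockSum_nonneg_of_card_le_one (hdiag : ∀ i, 0 ≤ A i i) {T : Finset ι} (hT : #T ≤ 1) :
    0 ≤ blockSum A T := by
  rcases Nat.le_one_iff_eq_zero_or_eq_one.mp hT with h | h
  · simp [card_eq_zero.mp h, blockSum]
  · obtain ⟨a, rfl⟩ := card_eq_one.mp h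
    simpa [blockSum] using hdiag a

variable [DecidableEq ι]

theorem blockSum_erase (A : Matrix ι ι ℝ) {S : Finset ι} {i : ι} (hi : i ∈ S) :
    blockSum A (S.erase i) = blockSum A S - ∑ j ∈ S, A i j - ∑ j ∈ S, A j i + A i i := by
  simp only [blockSum, sum_erase_eq_sub hi, sum_sub_distrib]
  ring

theorem sum_blockSum_erase (A : Matrix ι ι ℝ) (S : Finset ι) :
    ∑ i ∈ S, blockSum A (S.erase i) = (#S - 2) * blockSum A S + ∑ i ∈ S, A i i := by
  rw [sum_congr rfl fun i hi => blockSum_erase A hi]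
  simp only [sum_add_distrib, sum_sub_distrib, sum_const, nsmul_eq_mul]
  rw [sum_comm (f := fun i j => A j i)]
  simp only [blockSum]
  ring

theorem exists_blockSum_erase_ge (hdiag : ∀ i, 0 ≤ A i i) {S : Finset ι} (hS : S.Nonempty) :
    ∃ i ∈ S, (#S - 2 : ℝ) * blockSum A S ≤ #S * blockSum A (S.erase i) := by
  apply exists_le_of_sum_le hS
  rw [sum_const, nsmul_eq_mul, ← mul_sum, sum_blockSum_erase]
  have := sum_nonneg fun i (_ : i ∈ S) => hdiag i
  gcongr
  linarith

theorem exists_subset_card_eq_mul_blockSum_le (hdiag : ∀ i, 0 ≤ A i i) {m : ℕ} {S : Finset ι}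
    (hm : m ≤ #S) :
    ∃ T ⊆ S, #T = m ∧ (m * (m - 1) : ℝ) * blockSum A S ≤ (#S * (#S - 1) : ℝ) * blockSum A T := by
  rcases le_or_gt m 1 with hm1 | hm2
  · obtain ⟨T, hTS, rfl⟩ := exists_subset_card_eq hm
    refine ⟨T, hTS, rfl, ?_⟩
    have hT : (#T * (#T - 1) : ℝ) = 0 := by interval_cases #T <;> simp
    rw [hT, zero_mul]
    exact mul_nonneg (natCast_mul_sub_one_nonneg #S) (blockSum_nonneg_of_card_le_one hdiag hm1)
  obtain ⟨d, hd⟩ := Nat.exists_eq_add_of_le hm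
  induction d generalizing S with
  | zero => exact ⟨S, subset_rfl, by omega, by rw [hd, add_zero]⟩
  | succ d ih =>
    obtain ⟨i, hi, hQi⟩ := exists_blockSum_erase_ge hdiag (S := S) (card_pos.mp (by omega))
    have hcard : #(S.erase i) = m + d := by rw [card_erase_of_mem hi]; omega
    obtain ⟨T, hTS, hT, hQT⟩ := ih (by omega) hcard
    refine ⟨T, hTS.trans (erase_subset _ _), hT, ?_⟩
    rw [hcard] at hQT
    rw [hd] at hQi ⊢
    push_cast at hQi hQT ⊢
    -- chain the one-deletion loss `(k - 2) / k` with the inductive bound, then cancel `k - 2`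
    have hm_two : (2 : ℝ) ≤ m := by exact_mod_cast hm2
    have hd_nonneg : (0 : ℝ) ≤ d := d.cast_nonneg
    refine le_of_mul_le_mul_right ?_ (by linarith : (0 : ℝ) < m + d - 1)
    nlinarith [mul_le_mul_of_nonneg_left hQi (by nlinarith : (0 : ℝ) ≤ m * (m - 1)),
      mul_le_mul_of_nonneg_left hQT (by linarith : (0 : ℝ) ≤ m + d + 1)]

theorem blockSum_eq_dotProduct_mulVec [Fintype ι] (A : Matrix ι ι ℝ) (S : Finset ι) :
    blockSum A S = (fun i => if i ∈ S then 1 else 0) ⬝ᵥ A *ᵥ (fun i => if i ∈ S then 1 else 0) := by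
  simp [blockSum, dotProduct, mulVec, ite_mul, mul_ite, sum_ite_mem]

def signVec (T : Finset ι) : ι → ℝ := fun i => if i ∈ T then 1 else -1

variable [Fintype ι]

theorem eq_signVec_filter {x : ι → ℝ} (hx : ∀ i, x i = 1 ∨ x i = -1) :
    x = signVec (univ.filter (x · = 1)) := by
  ext i
  rcases hx i with h | h <;> simp [signVec, h]

theorem signVec_compl (T : Finset ι) : signVec Tᶜ = -signVec T := by
  ext i
  by_cases hi : i ∈ T <;> simp [signVec, hi]

noncomputable def cutValue (A : Matrix ι ι ℝ) (T : Finset ι) : ℝ :=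
  (1 / 4) * (signVec T ⬝ᵥ A *ᵥ signVec T)

theorem cutValue_compl (A : Matrix ι ι ℝ) (T : Finset ι) : cutValue A Tᶜ = cutValue A T := by
  simp [cutValue, signVec_compl, mulVec_neg]

theorem PosSemidef.cutValue_nonneg (hA : A.PosSemidef) (T : Finset ι) : 0 ≤ cutValue A T := by
  have := hA.dotProduct_mulVec_nonneg (signVec T)
  rw [star_trivial] at this
  unfold cutValue
  positivity

theorem cutValue_eq_blockSum (hcol : 1 ᵥ* A = 0) (hrow : A *ᵥ 1 = 0) (T : Finset ι) :
    cutValue A T = blockSum A T := by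
  set u : ι → ℝ := fun i => if i ∈ T then 1 else 0
  have hsign : signVec T = (2 : ℝ) • u - 1 := by
    ext i
    by_cases hi : i ∈ T <;> simp [signVec, u, hi]; norm_num
  have hu : 1 ⬝ᵥ A *ᵥ u = 0 := by rw [dotProduct_mulVec, hcol, zero_dotProduct]
  rw [cutValue, blockSum_eq_dotProduct_mulVec, hsign]
  simp only [mulVec_sub, mulVec_smul, hrow, sub_zero, sub_dotProduct, smul_dotProduct,
    dotProduct_smul, hu, smul_eq_mul]
  ring

theorem PosSemidef.exists_card_eq_cutValue_ge (hA : A.PosSemidef) (hcol : 1 ᵥ* A = 0)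
    {m : ℕ} {S : Finset ι} (hm : m ≤ #S) :
    ∃ T : Finset ι, #T = m ∧ (m * (m - 1)) / (#S * (#S - 1)) * cutValue A S ≤ cutValue A T := by
  obtain ⟨T, -, hT, hQT⟩ := exists_subset_card_eq_mul_blockSum_le (fun i => hA.diag_nonneg) hm
  refine ⟨T, hT, ?_⟩
  have hrow : A *ᵥ 1 = 0 := by
    rw [← hA.1.eq, conjTranspose_eq_transpose_of_trivial, mulVec_transpose, hcol]
  rcases (natCast_mul_sub_one_nonneg #S).eq_or_lt with hS | hS
  · rw [← hS, div_zero, zero_mul]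
    exact hA.cutValue_nonneg T
  · rw [div_mul_eq_mul_div, div_le_iff₀ hS, cutValue_eq_blockSum hcol hrow,
      cutValue_eq_blockSum hcol hrow, mul_comm (blockSum A T)]
    exact hQT

theorem PosSemidef.exists_card_eq_cutValue_ge_of_card_le (hA : A.PosSemidef)
    (hcol : 1 ᵥ* A = 0) {m : ℕ} {S : Finset ι} (hSm : #S ≤ m) (hm : m ≤ Fintype.card ι) :
    ∃ T : Finset ι, #T = m ∧
      ((Fintype.card ι - m) * (Fintype.card ι - m - 1)) /
        ((Fintype.card ι - #S) * (Fintype.card ι - #S - 1)) * cutValue A S ≤ cutValue A T := by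
  obtain ⟨T, hT, hQT⟩ := hA.exists_card_eq_cutValue_ge hcol
    (S := Sᶜ) (m := Fintype.card ι - m) (by rw [card_compl]; omega)
  refine ⟨Tᶜ, by rw [card_compl, hT]; omega, ?_⟩
  rw [cutValue_compl]
  rwa [cutValue_compl, card_compl, Nat.cast_sub hm, Nat.cast_sub (hSm.trans hm)] at hQT

end Matrix

theorem sq_sub_div_div_sq_sub_div {n p q a b : ℝ} (hn : n ≠ 0) (hp : p = a * n) (hq : q = b * n) :
    (a ^ 2 - a / n) / (b ^ 2 - b / n) = p * (p - 1) / (q * (q - 1)) := by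
  have key : ∀ r : ℝ, r ^ 2 - r / n = r * n * (r * n - 1) / n ^ 2 := fun r => by
    field_simp
  rw [key, key, div_div_div_cancel_right₀ (pow_ne_zero 2 hn), hp, hq]

theorem quadratic_ratio_le {a b n : ℝ} (hn : 0 < n) (ha : 2 / n ≤ a) (hb : 1 / n < b) :
    (a ^ 2 - 7 * a / n + 12 / n ^ 2) / (b ^ 2 + b / n) ≤ (a ^ 2 - a / n) / (b ^ 2 - b / n) := by
  obtain ⟨u, hu, rfl⟩ : ∃ u, 0 < u ∧ n = u⁻¹ := ⟨n⁻¹, inv_pos.mpr hn, (inv_inv n).symm⟩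
  simp only [div_inv_eq_mul, inv_pow, one_mul] at ha hb ⊢
  have hb0 : 0 < b := by linarith
  rw [div_le_div_iff₀ (by positivity) (by nlinarith)]
  -- the cross difference is 2bu((a - 2u)² + 3b(a - 2u) + 2u²)
  have key : 0 ≤ (a - 2 * u) ^ 2 + 3 * b * (a - 2 * u) + 2 * u ^ 2 := by
    have : 0 ≤ a - 2 * u := by linarith
    positivity
  nlinarith [mul_nonneg (mul_nonneg hb0.le hu.le) key]

theorem stmt5_general (n : ℕ) (A : Matrix (Fin n) (Fin n) ℝ)
    (hA : A.PosSemidef) (hA1 : (fun _ => (1 : ℝ)) ᵥ* A = 0)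
    (x : Fin n → ℝ) (hx : ∀ i, x i = 1 ∨ x i = -1)
    (M₀ : ℝ) (hM₀ : M₀ = (1 / 4) * (x ⬝ᵥ A.mulVec x))
    (S₀ : Finset (Fin n)) (hS₀ : S₀ = Finset.univ.filter (fun i => x i = 1))
    (s t : ℝ) (hs : s ∈ Set.Ioc (0 : ℝ) (1 / 2)) (ht : t ∈ Set.Ioc (0 : ℝ) (1 / 2))
    (hsn : (S₀.card : ℝ) = s * n)
    (htn : ∃ m : ℕ, (m : ℝ) = t * n) :
    ∃ T : Finset (Fin n), (T.card : ℝ) = t * n ∧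
      ((t > s →
        (1 / 4) * ((fun i => if i ∈ T then (1 : ℝ) else -1) ⬝ᵥ
            A.mulVec (fun i => if i ∈ T then (1 : ℝ) else -1)) ≥
          (((1 - t) ^ 2 - 7 * (1 - t) / n + 12 / (n : ℝ) ^ 2) /
              ((1 - s) ^ 2 + (1 - s) / n)) * M₀) ∧
       (t < s →
        (1 / 4) * ((fun i => if i ∈ T then (1 : ℝ) else -1) ⬝ᵥ
            A.mulVec (fun i => if i ∈ T then (1 : ℝ) else -1)) ≥
          ((t ^ 2 - t / n) / (s ^ 2 - s / n)) * M₀)) := by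
  rcases n.eq_zero_or_pos with rfl | hn
  · exact ⟨∅, by simp, fun _ => by simp [hM₀], fun _ => by simp [hM₀]⟩
  have hn_pos : (0 : ℝ) < n := by exact_mod_cast hn
  have hM : M₀ = cutValue A S₀ := by rw [hM₀, eq_signVec_filter hx, ← hS₀, cutValue]
  obtain ⟨m, hm⟩ := htn
  rcases lt_trichotomy t s with hts | rfl | hts
  · have hmS : m < #S₀ := by exact_mod_cast hm ▸ hsn ▸ mul_lt_mul_of_pos_right hts hn_pos
    obtain ⟨T, hT, hQT⟩ := hA.exists_card_eq_cutValue_ge hA1 hmS.le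
    refine ⟨T, by rw [hT, hm], fun h => absurd h hts.not_gt, fun _ => ?_⟩
    rwa [sq_sub_div_div_sq_sub_div hn_pos.ne' hm hsn, hM]
  · exact ⟨S₀, hsn, fun h => absurd h (lt_irrefl t), fun h => absurd h (lt_irrefl t)⟩
  · have hS0 : 0 < #S₀ := by exact_mod_cast hsn ▸ mul_pos hs.1 hn_pos
    have hSm : #S₀ < m := by exact_mod_cast hsn ▸ hm ▸ mul_lt_mul_of_pos_right hts hn_pos
    have hmn : 2 * m ≤ n := by exact_mod_cast (by nlinarith [ht.2] : (2 * m : ℝ) ≤ n)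
    have hSm' : (#S₀ + 1 : ℝ) ≤ m := by exact_mod_cast hSm
    have hmn' : (2 + m : ℝ) ≤ n := by exact_mod_cast (by omega : 2 + m ≤ n)
    obtain ⟨T, hT, hQT⟩ :=
      hA.exists_card_eq_cutValue_ge_of_card_le hA1 hSm.le (by simp only [Fintype.card_fin]; omega)
    refine ⟨T, by rw [hT, hm], fun _ => ?_, fun h => absurd h hts.not_gt⟩
    calc _ ≤ ((1 - t) ^ 2 - (1 - t) / n) / ((1 - s) ^ 2 - (1 - s) / n) * M₀ :=
          mul_le_mul_of_nonneg_right
            (quadratic_ratio_le hn_pos (by rw [div_le_iff₀ hn_pos]; linarith)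
              (by rw [div_lt_iff₀ hn_pos]; linarith))
            (hM ▸ hA.cutValue_nonneg S₀)
      _ ≤ cutValue A T := by
          rw [sq_sub_div_div_sq_sub_div hn_pos.ne' (p := n - m) (by rw [hm]; ring)
            (q := n - #S₀) (by rw [hsn]; ring), hM]
          simpa only [Fintype.card_fin] using hQT

theorem stmt5 (n : ℕ) (A : Matrix (Fin n) (Fin n) ℝ)
    (hA : A.PosSemidef) (hA1 : (fun _ => (1 : ℝ)) ᵥ* A = 0)
    (x : Fin n → ℝ) (hx : ∀ i, x i = 1 ∨ x i = -1)
    (M₀ : ℝ) (hM₀ : M₀ = (1 / 4) * (x ⬝ᵥ A.mulVec x))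
    (S₀ : Finset (Fin n)) (hS₀ : S₀ = Finset.univ.filter (fun i => x i = 1))
    (hhalf : (S₀.card : ℝ) ≤ (n : ℝ) / 2)
    (s t : ℝ) (hs : s ∈ Set.Ioc (0 : ℝ) (1 / 2)) (ht : t ∈ Set.Ioc (0 : ℝ) (1 / 2))
    (hsn : (S₀.card : ℝ) = s * n)
    (htn : ∃ m : ℕ, (m : ℝ) = t * n) :
    ∃ T : Finset (Fin n), (T.card : ℝ) = t * n ∧
      ((t > s →
        (1 / 4) * ((fun i => if i ∈ T then (1 : ℝ) else -1) ⬝ᵥ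
            A.mulVec (fun i => if i ∈ T then (1 : ℝ) else -1)) ≥
          (((1 - t) ^ 2 - 7 * (1 - t) / n + 12 / (n : ℝ) ^ 2) /
              ((1 - s) ^ 2 + (1 - s) / n)) * M₀) ∧
       (t < s →
        (1 / 4) * ((fun i => if i ∈ T then (1 : ℝ) else -1) ⬝ᵥ
            A.mulVec (fun i => if i ∈ T then (1 : ℝ) else -1)) ≥
          ((t ^ 2 - t / n) / (s ^ 2 - s / n)) * M₀)) :=
  stmt5_general n A hA hA1 x hx M₀ hM₀ S₀ hS₀ s t hs ht hsn htn
end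

section
/- Let W ∈ ℝ^{n×n} be a symmetric matrix of nonnegative integer weights with zero diagonal, let D be the diagonal matrix with D_{ii} = Σ_j W_{ij}, and let L = D − W be the Laplacian. Let M = Σ_{i,j} W_{ij} and assume M > 0. Let Q be a positive integer with Q ≥ (M² − 1) · max_i D_{ii}. Then for every s ∈ {−1,1}^n, the vector z = (I + (1/Q)L)^{-1} s satisfies s^T L s − 8/M − 2/M³ ≤ z^T L z ≤ s^T L s + 4/M + 5/(2M³). -/
/-! With `q = 1/Q` and `s = (I + qL) z`, symmetry of `L` gives
`sᵀLs = zᵀLz + 2q‖Lz‖² + q² (Lz)ᵀL(Lz)`, so `zᵀLz ≤ sᵀLs`. Conversely, Cauchy–Schwarz row by row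
gives `‖Lx‖² ≤ 2d · xᵀLx` for the maximal degree `d`, hence also `xᵀLx ≤ 2d ‖x‖²`, and so
`sᵀLs ≤ (1 + 2dq)² zᵀLz`. As `sᵀLs ≤ 2M` for a sign vector and `(M² - 1) · 2dq ≤ 2`, the loss
`sᵀLs - zᵀLz` is at most `8/M`. -/

open Matrix BigOperators

section Smoothing

variable {ι : Type*} [Fintype ι]

lemma dotProduct_sq_le_dotProduct_self_mul (x y : ι → ℝ) :
    (x ⬝ᵥ y) ^ 2 ≤ (x ⬝ᵥ x) * (y ⬝ᵥ y) := by
  simpa only [dotProduct, sq] using Finset.sum_mul_sq_le_sq_mul_sq Finset.univ x y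

variable {L : Matrix ι ι ℝ} {c q : ℝ}

lemma dotProduct_mulVec_le_of_mulVec_dotProduct_self_le (hc : 0 ≤ c)
    (hLc : ∀ x, L *ᵥ x ⬝ᵥ L *ᵥ x ≤ c * (x ⬝ᵥ L *ᵥ x)) (x : ι → ℝ) :
    x ⬝ᵥ L *ᵥ x ≤ c * (x ⬝ᵥ x) := by
  have hx : 0 ≤ x ⬝ᵥ x := dotProduct_self_star_nonneg x
  have hcs : (x ⬝ᵥ L *ᵥ x) ^ 2 ≤ (x ⬝ᵥ x) * (c * (x ⬝ᵥ L *ᵥ x)) :=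
    (dotProduct_sq_le_dotProduct_self_mul x _).trans (mul_le_mul_of_nonneg_left (hLc x) hx)
  rcases le_or_gt (x ⬝ᵥ L *ᵥ x) 0 with hneg | hpos
  · exact hneg.trans (mul_nonneg hc hx)
  · exact le_of_mul_le_mul_right (by nlinarith) hpos

variable [DecidableEq ι]

lemma dotProduct_mulVec_one_add_smul_mulVec (hL : L.IsSymm) (z : ι → ℝ) :
    (1 + q • L) *ᵥ z ⬝ᵥ L *ᵥ ((1 + q • L) *ᵥ z) =
      z ⬝ᵥ L *ᵥ z + 2 * q * (L *ᵥ z ⬝ᵥ L *ᵥ z) + q ^ 2 * (L *ᵥ z ⬝ᵥ L *ᵥ (L *ᵥ z)) := by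
  have hadj : z ⬝ᵥ L *ᵥ (L *ᵥ z) = L *ᵥ z ⬝ᵥ L *ᵥ z := by
    rw [dotProduct_mulVec, ← mulVec_transpose, hL.eq]
  simp only [add_mulVec, one_mulVec, smul_mulVec, mulVec_add, mulVec_smul, add_dotProduct,
    dotProduct_add, smul_dotProduct, dotProduct_smul, smul_eq_mul, hadj]
  ring

lemma one_add_smul_mulVec_inv_mulVec (hL : L.PosSemidef) (hq : 0 ≤ q) (s : ι → ℝ) :
    (1 + q • L) *ᵥ ((1 + q • L)⁻¹ *ᵥ s) = s := by
  have hdet : IsUnit (1 + q • L).det :=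
    (isUnit_iff_isUnit_det _).1 (PosDef.one.add_posSemidef (hL.smul hq)).isUnit
  rw [mulVec_mulVec, mul_nonsing_inv _ hdet, one_mulVec]

lemma dotProduct_mulVec_le_one_add_smul_mulVec (hL : L.PosSemidef) (hq : 0 ≤ q)
    (z : ι → ℝ) : z ⬝ᵥ L *ᵥ z ≤ (1 + q • L) *ᵥ z ⬝ᵥ L *ᵥ ((1 + q • L) *ᵥ z) := by
  rw [dotProduct_mulVec_one_add_smul_mulVec (isHermitian_iff_isSymm.1 hL.isHermitian)]
  have hv : 0 ≤ L *ᵥ z ⬝ᵥ L *ᵥ (L *ᵥ z) := by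
    simpa using hL.dotProduct_mulVec_nonneg (L *ᵥ z)
  have := dotProduct_self_star_nonneg (L *ᵥ z)
  rw [add_assoc]
  exact le_add_of_nonneg_right (by positivity)

lemma one_add_smul_mulVec_dotProduct_mulVec_le (hL : L.PosSemidef) (hq : 0 ≤ q) (hc : 0 ≤ c)
    (hLc : ∀ x, L *ᵥ x ⬝ᵥ L *ᵥ x ≤ c * (x ⬝ᵥ L *ᵥ x)) (z : ι → ℝ) :
    (1 + q • L) *ᵥ z ⬝ᵥ L *ᵥ ((1 + q • L) *ᵥ z) ≤ (1 + c * q) ^ 2 * (z ⬝ᵥ L *ᵥ z) := by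
  rw [dotProduct_mulVec_one_add_smul_mulVec (isHermitian_iff_isSymm.1 hL.isHermitian)]
  have hLz := hLc z
  have hLLz : L *ᵥ z ⬝ᵥ L *ᵥ (L *ᵥ z) ≤ c * (c * (z ⬝ᵥ L *ᵥ z)) :=
    (dotProduct_mulVec_le_of_mulVec_dotProduct_self_le hc hLc (L *ᵥ z)).trans
      (mul_le_mul_of_nonneg_left hLz hc)
  nlinarith [mul_le_mul_of_nonneg_left hLz hq, mul_le_mul_of_nonneg_left hLLz (sq_nonneg q)]

end Smoothing

section WeightedLaplacian

variable {ι : Type*} [Fintype ι] [DecidableEq ι] (W : Matrix ι ι ℝ)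

def weightedLaplacian : Matrix ι ι ℝ := diagonal (fun i => ∑ j, W i j) - W

variable {W}

lemma weightedLaplacian_mulVec_apply (x : ι → ℝ) (i : ι) :
    (weightedLaplacian W *ᵥ x) i = ∑ j, W i j * (x i - x j) := by
  rw [weightedLaplacian, sub_mulVec, Pi.sub_apply, mulVec_diagonal, Finset.sum_mul, mulVec,
    dotProduct, ← Finset.sum_sub_distrib]
  simp only [mul_sub]

lemma isSymm_weightedLaplacian (hW : W.IsSymm) : (weightedLaplacian W).IsSymm :=
  (isSymm_diagonal _).sub hW

lemma dotProduct_weightedLaplacian_mulVec (hW : W.IsSymm) (x : ι → ℝ) :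
    x ⬝ᵥ weightedLaplacian W *ᵥ x = (∑ i, ∑ j, W i j * (x i - x j) ^ 2) / 2 := by
  have hswap : ∑ i, ∑ j, W i j * (x i * (x i - x j)) = ∑ i, ∑ j, W i j * (x j * (x j - x i)) := by
    rw [Finset.sum_comm]
    simp only [hW.apply]
  have hsplit : ∑ i, ∑ j, W i j * (x i - x j) ^ 2 =
      ∑ i, ∑ j, W i j * (x i * (x i - x j)) + ∑ i, ∑ j, W i j * (x j * (x j - x i)) := by
    simp only [← Finset.sum_add_distrib]
    exact Finset.sum_congr rfl fun i _ => Finset.sum_congr rfl fun j _ => by ring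
  rw [hsplit, ← hswap, add_self_div_two]
  simp only [dotProduct, weightedLaplacian_mulVec_apply, Finset.mul_sum]
  exact Finset.sum_congr rfl fun i _ => Finset.sum_congr rfl fun j _ => by ring

lemma posSemidef_weightedLaplacian (hW : W.IsSymm) (hW₀ : ∀ i j, 0 ≤ W i j) :
    (weightedLaplacian W).PosSemidef := by
  refine .of_dotProduct_mulVec_nonneg (isHermitian_iff_isSymm.2 (isSymm_weightedLaplacian hW))
    fun x => ?_
  rw [star_trivial, dotProduct_weightedLaplacian_mulVec hW]
  exact div_nonneg (Finset.sum_nonneg fun i _ => Finset.sum_nonneg fun j _ =>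
    mul_nonneg (hW₀ i j) (sq_nonneg _)) zero_le_two

lemma weightedLaplacian_mulVec_dotProduct_self_le (hW : W.IsSymm) (hW₀ : ∀ i j, 0 ≤ W i j)
    {d : ℝ} (hd : ∀ i, ∑ j, W i j ≤ d) (x : ι → ℝ) :
    weightedLaplacian W *ᵥ x ⬝ᵥ weightedLaplacian W *ᵥ x ≤
      2 * d * (x ⬝ᵥ weightedLaplacian W *ᵥ x) := by
  have hrow : ∀ i, (∑ j, W i j * (x i - x j)) ^ 2 ≤ d * ∑ j, W i j * (x i - x j) ^ 2 := fun i =>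
    (Finset.sum_sq_le_sum_mul_sum_of_sq_le_mul _ (fun j _ => hW₀ i j)
      (fun j _ => mul_nonneg (hW₀ i j) (sq_nonneg _)) (fun j _ => le_of_eq (by ring))).trans
      (mul_le_mul_of_nonneg_right (hd i) (Finset.sum_nonneg fun j _ =>
        mul_nonneg (hW₀ i j) (sq_nonneg _)))
  calc weightedLaplacian W *ᵥ x ⬝ᵥ weightedLaplacian W *ᵥ x
      = ∑ i, (∑ j, W i j * (x i - x j)) ^ 2 := by
        simp only [dotProduct, weightedLaplacian_mulVec_apply, sq]
    _ ≤ ∑ i, d * ∑ j, W i j * (x i - x j) ^ 2 := Finset.sum_le_sum fun i _ => hrow i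
    _ = 2 * d * (x ⬝ᵥ weightedLaplacian W *ᵥ x) := by
        rw [dotProduct_weightedLaplacian_mulVec hW, ← Finset.mul_sum]; ring

lemma dotProduct_weightedLaplacian_mulVec_le_of_sign (hW : W.IsSymm) (hW₀ : ∀ i j, 0 ≤ W i j)
    {s : ι → ℝ} (hs : ∀ i, s i = 1 ∨ s i = -1) :
    s ⬝ᵥ weightedLaplacian W *ᵥ s ≤ 2 * ∑ i, ∑ j, W i j := by
  have hdiff : ∀ i j, (s i - s j) ^ 2 ≤ 4 := fun i j => by
    rcases hs i with h | h <;> rcases hs j with h' | h' <;> norm_num [h, h']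
  rw [dotProduct_weightedLaplacian_mulVec hW, div_le_iff₀ two_pos]
  calc ∑ i, ∑ j, W i j * (s i - s j) ^ 2 ≤ ∑ i, ∑ j, W i j * 4 :=
        Finset.sum_le_sum fun i _ => Finset.sum_le_sum fun j _ =>
          mul_le_mul_of_nonneg_left (hdiff i j) (hW₀ i j)
    _ = 2 * (∑ i, ∑ j, W i j) * 2 := by simp only [← Finset.sum_mul]; ring

end WeightedLaplacian

lemma sub_le_eight_div_of_le_one_add_sq_mul {M t a e : ℝ} (hM : 0 < M) (ht : 0 ≤ t)
    (hMt : (M ^ 2 - 1) * t ≤ 2) (ha : a ≤ 2 * M) (hae : a ≤ (1 + t) ^ 2 * e) :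
    a - e ≤ 8 / M := by
  have hloss : (1 + t) ^ 2 * (a - e) ≤ (2 * t + t ^ 2) * (2 * M) := by
    nlinarith [mul_le_mul_of_nonneg_left ha (by positivity : 0 ≤ 2 * t + t ^ 2)]
  have hMt' : M ^ 2 * (2 * t + t ^ 2) ≤ 4 * (1 + t) ^ 2 := by nlinarith
  rw [le_div_iff₀ hM]
  nlinarith [mul_le_mul_of_nonneg_left hloss hM.le]

theorem stmt9_general (n : ℕ) (W : Matrix (Fin n) (Fin n) ℝ)
    (hsymm : W.IsSymm) (hint : ∀ i j, ∃ m : ℕ, W i j = m)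
    (L : Matrix (Fin n) (Fin n) ℝ)
    (hL : L = Matrix.diagonal (fun i => ∑ j, W i j) - W)
    (M : ℝ) (hM : M = ∑ i, ∑ j, W i j) (hMpos : 0 < M)
    (Q : ℕ)
    (hQ : ∀ i, (M ^ 2 - 1) * (∑ j, W i j) ≤ (Q : ℝ))
    (s : Fin n → ℝ) (hs : ∀ i, s i = 1 ∨ s i = -1)
    (z : Fin n → ℝ) (hz : z = ((1 + (Q : ℝ)⁻¹ • L)⁻¹).mulVec s) :
    s ⬝ᵥ L.mulVec s - 8 / M - 2 / M ^ 3 ≤ z ⬝ᵥ L.mulVec z ∧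
      z ⬝ᵥ L.mulVec z ≤ s ⬝ᵥ L.mulVec s + 4 / M + 5 / (2 * M ^ 3) := by
  have hW₀ : ∀ i j, 0 ≤ W i j := fun i j => (hint i j).elim fun m hm => hm ▸ m.cast_nonneg
  change L = weightedLaplacian W at hL
  subst hL
  have hLpsd := posSemidef_weightedLaplacian hsymm hW₀
  have hq : (0 : ℝ) ≤ (Q : ℝ)⁻¹ := by positivity
  have hsz : (1 + (Q : ℝ)⁻¹ • weightedLaplacian W) *ᵥ z = s := by
    rw [hz, one_add_smul_mulVec_inv_mulVec hLpsd hq]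
  have : Nonempty (Fin n) := ⟨⟨0, Nat.pos_of_ne_zero (by rintro rfl; simp [hM] at hMpos)⟩⟩
  obtain ⟨i₀, hi₀⟩ := Finite.exists_max fun i => ∑ j, W i j
  have hd : 0 ≤ ∑ j, W i₀ j := Finset.sum_nonneg fun j _ => hW₀ i₀ j
  have hupper := dotProduct_mulVec_le_one_add_smul_mulVec hLpsd hq z
  have hlower := one_add_smul_mulVec_dotProduct_mulVec_le hLpsd hq (by positivity)
    (weightedLaplacian_mulVec_dotProduct_self_le hsymm hW₀ hi₀) z
  rw [hsz] at hupper hlower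
  have hsM : s ⬝ᵥ weightedLaplacian W *ᵥ s ≤ 2 * M :=
    hM ▸ dotProduct_weightedLaplacian_mulVec_le_of_sign hsymm hW₀ hs
  have ht : (M ^ 2 - 1) * (2 * (∑ j, W i₀ j) * (Q : ℝ)⁻¹) ≤ 2 := by
    nlinarith [mul_le_mul_of_nonneg_right (hQ i₀) hq, mul_inv_le_one (a := (Q : ℝ))]
  have hloss := sub_le_eight_div_of_le_one_add_sq_mul hMpos (by positivity) ht hsM hlower
  constructor
  · have : 0 ≤ 2 / M ^ 3 := by positivity
    linarith
  · have : 0 < 4 / M + 5 / (2 * M ^ 3) := by positivity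
    linarith

theorem stmt9 (n : ℕ) (W : Matrix (Fin n) (Fin n) ℝ)
    (hsymm : W.IsSymm) (hint : ∀ i j, ∃ m : ℕ, W i j = m) (hdiag : ∀ i, W i i = 0)
    (L : Matrix (Fin n) (Fin n) ℝ)
    (hL : L = Matrix.diagonal (fun i => ∑ j, W i j) - W)
    (M : ℝ) (hM : M = ∑ i, ∑ j, W i j) (hMpos : 0 < M)
    (Q : ℕ) (hQpos : 0 < Q)
    (hQ : ∀ i, (M ^ 2 - 1) * (∑ j, W i j) ≤ (Q : ℝ))
    (s : Fin n → ℝ) (hs : ∀ i, s i = 1 ∨ s i = -1)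
    (z : Fin n → ℝ) (hz : z = ((1 + (Q : ℝ)⁻¹ • L)⁻¹).mulVec s) :
    s ⬝ᵥ L.mulVec s - 8 / M - 2 / M ^ 3 ≤ z ⬝ᵥ L.mulVec z ∧
      z ⬝ᵥ L.mulVec z ≤ s ⬝ᵥ L.mulVec s + 4 / M + 5 / (2 * M ^ 3) :=
  stmt9_general n W hsymm hint L hL M hM hMpos Q hQ s hs z hz
end

section
/- Let W ∈ ℝ^{n×n} be a symmetric matrix of nonnegative integer weights with zero diagonal, let L be its Laplacian, let M = Σ_{i,j} W_{ij}, and assume M ≥ 17. Let Q be a positive integer with Q ≥ (M² − 1) · max_i D_{ii}, and for s ∈ {−1,1}^n write z(s) = (I + (1/Q)L)^{-1} s. Then: (i) for every s ∈ {−1,1}^n, |z(s)^T L z(s) − s^T L s| < 1/2, so the integer nearest to z(s)^T L z(s) equals s^T L s; and (ii) every s* ∈ {−1,1}^n that maximizes s ↦ z(s)^T L z(s) over {−1,1}^n also maximizes s ↦ s^T L s over {−1,1}^n, and the maximum of s ↦ s^T L s over {−1,1}^n equals the integer nearest to the maximum of s ↦ z(s)^T L z(s) over {−1,1}^n. -/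
open Matrix BigOperators

/-!
Since `s = z + Q⁻¹ L z` and `L` is symmetric,
`sᵀLs - zᵀLz = 2 Q⁻¹ ‖Lz‖² + Q⁻² (Lz)ᵀL(Lz) ≥ 0`. If every degree is at most `c`, then
`xᵀLx ≤ 2c ‖x‖²` and, by Cauchy–Schwarz on each row of `L`, `‖Lx‖² ≤ 2c xᵀLx`. With
`c = Q / (M² - 1)` this bounds the gap by `4/(M² - 1) · (1 + 1/(M² - 1)) · sᵀLs`, and
`sᵀLs ≤ 2M` for sign vectors, giving at most `8M³/(M² - 1)² < 1/2` once `M ≥ 17`. As `sᵀLs` is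
an integer, rounding recovers it, and a maximizer of `zᵀLz` maximizes `sᵀLs`.
-/

theorem round_eq_of_abs_sub_lt_half {α : Type*} [Field α] [LinearOrder α] [IsStrictOrderedRing α]
    [FloorRing α] {x : α} {k : ℤ} (h : |x - k| < 1 / 2) : round x = k := by
  obtain ⟨h₁, h₂⟩ := abs_lt.mp h
  exact round_eq_iff.mpr ⟨by linarith, by linarith⟩

theorem Int.le_of_abs_sub_lt_half {α : Type*} [Field α] [LinearOrder α] [IsStrictOrderedRing α]
    {x y : α} {k l : ℤ} (hx : |x - k| < 1 / 2) (hy : |y - l| < 1 / 2) (hxy : x ≤ y) : k ≤ l := by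
  have hlt : (k : α) < l + 1 := by
    linarith [(abs_lt.mp hx).1, (abs_lt.mp hy).2]
  exact Int.lt_add_one_iff.mp (by exact_mod_cast hlt)

theorem sixteen_mul_cube_lt_sq_sub_one_sq {M : ℝ} (hM : 17 ≤ M) :
    16 * M ^ 3 < (M ^ 2 - 1) ^ 2 := by
  nlinarith [mul_nonneg (pow_nonneg (by linarith : (0 : ℝ) ≤ M) 3) (sub_nonneg.mpr hM)]

namespace Matrix

variable {ι : Type*} [Fintype ι]

theorem exists_int_dotProduct_mulVec {κ : Type*} [Fintype κ] {A : Matrix ι κ ℝ} {x : ι → ℝ}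
    {y : κ → ℝ} (hA : ∀ i j, ∃ k : ℤ, A i j = k) (hx : ∀ i, ∃ k : ℤ, x i = k)
    (hy : ∀ j, ∃ k : ℤ, y j = k) :
    ∃ k : ℤ, x ⬝ᵥ A *ᵥ y = k := by
  choose A' hA' using hA
  choose x' hx' using hx
  choose y' hy' using hy
  refine ⟨x' ⬝ᵥ of A' *ᵥ y', ?_⟩
  simp only [dotProduct, mulVec, hA', hx', hy', of_apply]
  push_cast
  rfl

theorem dotProduct_add_smul_mulVec_add_smul {R : Type*} [CommRing R] {A : Matrix ι ι R}
    (hA : A.IsSymm) (z : ι → R) (q : R) :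
    (z + q • A *ᵥ z) ⬝ᵥ A *ᵥ (z + q • A *ᵥ z) =
      z ⬝ᵥ A *ᵥ z + 2 * q * (A *ᵥ z ⬝ᵥ A *ᵥ z) + q ^ 2 * (A *ᵥ z ⬝ᵥ A *ᵥ (A *ᵥ z)) := by
  have hswap : z ⬝ᵥ A *ᵥ (A *ᵥ z) = A *ᵥ z ⬝ᵥ A *ᵥ z := by
    rw [dotProduct_mulVec, ← mulVec_transpose, hA.eq]
  simp only [mulVec_add, mulVec_smul, dotProduct_add, add_dotProduct, dotProduct_smul,
    smul_dotProduct, smul_eq_mul, hswap]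
  ring

variable [DecidableEq ι]

def laplacian {R : Type*} [Ring R] (W : Matrix ι ι R) : Matrix ι ι R :=
  diagonal (fun i => ∑ j, W i j) - W

section Ring

variable {R : Type*} [CommRing R] {W : Matrix ι ι R}

theorem laplacian_isSymm (hW : W.IsSymm) : (laplacian W).IsSymm := by
  rw [laplacian, IsSymm, transpose_sub, diagonal_transpose, hW.eq]

theorem laplacian_mulVec_apply (x : ι → R) (i : ι) :
    (laplacian W *ᵥ x) i = ∑ j, W i j * (x i - x j) := by
  rw [laplacian, sub_mulVec, Pi.sub_apply, mulVec_diagonal, Finset.sum_mul, mulVec, dotProduct,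
    ← Finset.sum_sub_distrib]
  simp only [mul_sub]

theorem two_mul_dotProduct_laplacian_mulVec (hW : W.IsSymm) (x : ι → R) :
    2 * (x ⬝ᵥ laplacian W *ᵥ x) = ∑ i, ∑ j, W i j * (x i - x j) ^ 2 := by
  have hexpand : x ⬝ᵥ laplacian W *ᵥ x = ∑ i, ∑ j, x i * (W i j * (x i - x j)) := by
    simp only [dotProduct, laplacian_mulVec_apply, Finset.mul_sum]
  have hswap : ∑ i, ∑ j, x i * (W i j * (x i - x j)) =
      ∑ i, ∑ j, x j * (W i j * (x j - x i)) := by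
    rw [Finset.sum_comm]
    simp only [hW.apply]
  rw [hexpand, two_mul]
  nth_rewrite 2 [hswap]
  rw [← Finset.sum_add_distrib]
  refine Finset.sum_congr rfl fun i _ => ?_
  rw [← Finset.sum_add_distrib]
  exact Finset.sum_congr rfl fun j _ => by ring

end Ring

theorem exists_int_laplacian_apply {W : Matrix ι ι ℝ} (hW : ∀ i j, ∃ k : ℤ, W i j = k)
    (i j : ι) : ∃ k : ℤ, laplacian W i j = k := by
  choose W' hW' using hW
  refine ⟨laplacian (of W') i j, ?_⟩
  simp only [laplacian, sub_apply, diagonal_apply, hW', of_apply]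
  split_ifs <;> push_cast <;> rfl

variable {W : Matrix ι ι ℝ}

theorem dotProduct_laplacian_mulVec_nonneg (hW : W.IsSymm) (hW₀ : ∀ i j, 0 ≤ W i j)
    (x : ι → ℝ) : 0 ≤ x ⬝ᵥ laplacian W *ᵥ x := by
  have hsum : 0 ≤ ∑ i, ∑ j, W i j * (x i - x j) ^ 2 :=
    Finset.sum_nonneg fun i _ => Finset.sum_nonneg fun j _ => mul_nonneg (hW₀ i j) (sq_nonneg _)
  linarith [two_mul_dotProduct_laplacian_mulVec hW x]

theorem dotProduct_laplacian_mulVec_le (hW : W.IsSymm) (hW₀ : ∀ i j, 0 ≤ W i j) {c : ℝ}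
    (hc : ∀ i, ∑ j, W i j ≤ c) (x : ι → ℝ) :
    x ⬝ᵥ laplacian W *ᵥ x ≤ 2 * c * (x ⬝ᵥ x) := by
  have hcol : ∑ i, ∑ j, W i j * x j ^ 2 = ∑ i, (∑ j, W i j) * x i ^ 2 := by
    rw [Finset.sum_comm]
    simp only [Finset.sum_mul, hW.apply]
  have key : ∑ i, ∑ j, W i j * (x i - x j) ^ 2 ≤ 4 * c * (x ⬝ᵥ x) :=
    calc ∑ i, ∑ j, W i j * (x i - x j) ^ 2
        ≤ ∑ i, ∑ j, (2 * (W i j * x i ^ 2) + 2 * (W i j * x j ^ 2)) := by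
          gcongr with i _ j _
          nlinarith [hW₀ i j, mul_nonneg (hW₀ i j) (sq_nonneg (x i + x j))]
      _ = 2 * ∑ i, (∑ j, W i j) * x i ^ 2 + 2 * ∑ i, ∑ j, W i j * x j ^ 2 := by
          simp only [Finset.sum_add_distrib, ← Finset.mul_sum, Finset.sum_mul]
      _ = 4 * ∑ i, (∑ j, W i j) * x i ^ 2 := by rw [hcol]; ring
      _ ≤ 4 * ∑ i, c * x i ^ 2 := by gcongr with i _; exact hc i
      _ = 4 * c * (x ⬝ᵥ x) := by simp only [dotProduct, ← Finset.mul_sum, sq]; ring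
  linarith [two_mul_dotProduct_laplacian_mulVec hW x]

theorem laplacian_mulVec_dotProduct_self_le (hW : W.IsSymm) (hW₀ : ∀ i j, 0 ≤ W i j)
    {c : ℝ} (hc : ∀ i, ∑ j, W i j ≤ c) (x : ι → ℝ) :
    laplacian W *ᵥ x ⬝ᵥ laplacian W *ᵥ x ≤ 2 * c * (x ⬝ᵥ laplacian W *ᵥ x) := by
  have hrow (i : ι) : (∑ j, W i j * (x i - x j)) ^ 2 ≤
      c * ∑ j, W i j * (x i - x j) ^ 2 := by
    have hcs := Finset.sum_sq_le_sum_mul_sum_of_sq_le_mul Finset.univ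
      (r := fun j => W i j * (x i - x j)) (f := fun j => W i j)
      (g := fun j => W i j * (x i - x j) ^ 2) (fun j _ => hW₀ i j)
      (fun j _ => mul_nonneg (hW₀ i j) (sq_nonneg _)) (fun j _ => le_of_eq (by ring))
    exact hcs.trans (mul_le_mul_of_nonneg_right (hc i)
      (Finset.sum_nonneg fun j _ => mul_nonneg (hW₀ i j) (sq_nonneg _)))
  calc laplacian W *ᵥ x ⬝ᵥ laplacian W *ᵥ x = ∑ i, (∑ j, W i j * (x i - x j)) ^ 2 := by
        simp only [dotProduct, laplacian_mulVec_apply, sq]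
    _ ≤ ∑ i, c * ∑ j, W i j * (x i - x j) ^ 2 := Finset.sum_le_sum fun i _ => hrow i
    _ = 2 * c * (x ⬝ᵥ laplacian W *ᵥ x) := by
        rw [← Finset.mul_sum, ← two_mul_dotProduct_laplacian_mulVec hW x]; ring

theorem isUnit_one_add_smul_laplacian (hW : W.IsSymm) (hW₀ : ∀ i j, 0 ≤ W i j) {q : ℝ}
    (hq : 0 ≤ q) : IsUnit (1 + q • laplacian W) := by
  have hL : (laplacian W).PosSemidef :=
    .of_dotProduct_mulVec_nonneg (isHermitian_iff_isSymm.mpr (laplacian_isSymm hW))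
      fun x => by simpa using dotProduct_laplacian_mulVec_nonneg hW hW₀ x
  exact (PosDef.one.add_posSemidef (hL.smul hq)).isUnit

theorem inv_one_add_smul_laplacian_mulVec_add (hW : W.IsSymm) (hW₀ : ∀ i j, 0 ≤ W i j)
    {q : ℝ} (hq : 0 ≤ q) (s : ι → ℝ) :
    (1 + q • laplacian W)⁻¹ *ᵥ s + q • laplacian W *ᵥ ((1 + q • laplacian W)⁻¹ *ᵥ s) = s := by
  have hunit := (isUnit_iff_isUnit_det _).mp (isUnit_one_add_smul_laplacian hW hW₀ hq)
  calc _ = (1 + q • laplacian W) *ᵥ ((1 + q • laplacian W)⁻¹ *ᵥ s) := by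
        rw [add_mulVec, one_mulVec, smul_mulVec]
    _ = s := by rw [mulVec_mulVec, mul_nonsing_inv _ hunit, one_mulVec]

theorem sub_dotProduct_laplacian_mulVec_le (hW : W.IsSymm) (hW₀ : ∀ i j, 0 ≤ W i j)
    {c q : ℝ} (hc : ∀ i, ∑ j, W i j ≤ c) (hc₀ : 0 ≤ c) (hq : 0 ≤ q) {s z : ι → ℝ}
    (hz : z + q • laplacian W *ᵥ z = s) :
    0 ≤ s ⬝ᵥ laplacian W *ᵥ s - z ⬝ᵥ laplacian W *ᵥ z ∧
      s ⬝ᵥ laplacian W *ᵥ s - z ⬝ᵥ laplacian W *ᵥ z ≤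
        4 * (q * c) * (1 + q * c) * (s ⬝ᵥ laplacian W *ᵥ s) := by
  subst hz
  set L := laplacian W
  rw [dotProduct_add_smul_mulVec_add_smul (laplacian_isSymm hW)]
  have hP₁ := dotProduct_laplacian_mulVec_nonneg hW hW₀ z
  have hP₂ : 0 ≤ L *ᵥ z ⬝ᵥ L *ᵥ z := by simpa using dotProduct_self_star_nonneg (L *ᵥ z)
  have hP₃ := dotProduct_laplacian_mulVec_nonneg hW hW₀ (L *ᵥ z)
  have h₂ := laplacian_mulVec_dotProduct_self_le hW hW₀ hc z
  have h₃ := dotProduct_laplacian_mulVec_le hW hW₀ hc (L *ᵥ z)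
  have hgap : 0 ≤ 2 * q * (L *ᵥ z ⬝ᵥ L *ᵥ z) + q ^ 2 * (L *ᵥ z ⬝ᵥ L *ᵥ (L *ᵥ z)) := by positivity
  refine ⟨by linarith, ?_⟩
  calc z ⬝ᵥ L *ᵥ z + 2 * q * (L *ᵥ z ⬝ᵥ L *ᵥ z) + q ^ 2 * (L *ᵥ z ⬝ᵥ L *ᵥ (L *ᵥ z)) -
        z ⬝ᵥ L *ᵥ z
      = 2 * q * (L *ᵥ z ⬝ᵥ L *ᵥ z) + q ^ 2 * (L *ᵥ z ⬝ᵥ L *ᵥ (L *ᵥ z)) := by ring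
    _ ≤ 2 * q * (1 + q * c) * (L *ᵥ z ⬝ᵥ L *ᵥ z) := by
        nlinarith [mul_le_mul_of_nonneg_left h₃ (sq_nonneg q)]
    _ ≤ 4 * (q * c) * (1 + q * c) * (z ⬝ᵥ L *ᵥ z) := by
        nlinarith [mul_le_mul_of_nonneg_left h₂ (by positivity : 0 ≤ 2 * q * (1 + q * c))]
    _ ≤ _ := by gcongr; linarith

theorem dotProduct_laplacian_mulVec_le_two_mul_sum (hW : W.IsSymm) (hW₀ : ∀ i j, 0 ≤ W i j)
    {s : ι → ℝ} (hs : ∀ i, |s i| ≤ 1) : s ⬝ᵥ laplacian W *ᵥ s ≤ 2 * ∑ i, ∑ j, W i j := by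
  have key : ∑ i, ∑ j, W i j * (s i - s j) ^ 2 ≤ ∑ i, ∑ j, W i j * 4 := by
    refine Finset.sum_le_sum fun i _ => Finset.sum_le_sum fun j _ =>
      mul_le_mul_of_nonneg_left ?_ (hW₀ i j)
    have hsi := abs_le.mp (hs i)
    have hsj := abs_le.mp (hs j)
    nlinarith
  simp only [← Finset.sum_mul] at key
  linarith [two_mul_dotProduct_laplacian_mulVec hW s]

theorem abs_dotProduct_laplacian_mulVec_sub_lt_half (hW : W.IsSymm) (hW₀ : ∀ i j, 0 ≤ W i j)
    {M Q : ℝ} (hM : M = ∑ i, ∑ j, W i j) (hM17 : 17 ≤ M) (hQ : 0 < Q)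
    (hQM : ∀ i, (M ^ 2 - 1) * ∑ j, W i j ≤ Q) {s z : ι → ℝ} (hs : ∀ i, |s i| ≤ 1)
    (hz : z + Q⁻¹ • laplacian W *ᵥ z = s) :
    |z ⬝ᵥ laplacian W *ᵥ z - s ⬝ᵥ laplacian W *ᵥ s| < 1 / 2 := by
  have he : 0 < M ^ 2 - 1 := by nlinarith
  have hc (i : ι) : ∑ j, W i j ≤ Q / (M ^ 2 - 1) := (le_div_iff₀' he).mpr (hQM i)
  obtain ⟨hgap₀, hgap⟩ := sub_dotProduct_laplacian_mulVec_le hW hW₀ hc (by positivity)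
    (inv_nonneg.mpr hQ.le) hz
  have hqc : Q⁻¹ * (Q / (M ^ 2 - 1)) = (M ^ 2 - 1)⁻¹ := by field_simp
  have hsLs := dotProduct_laplacian_mulVec_le_two_mul_sum hW hW₀ hs
  rw [hqc] at hgap
  rw [← hM] at hsLs
  rw [abs_sub_comm, abs_of_nonneg hgap₀]
  calc _ ≤ 4 * (M ^ 2 - 1)⁻¹ * (1 + (M ^ 2 - 1)⁻¹) * (2 * M) := hgap.trans (by gcongr)
    _ = 8 * M ^ 3 / (M ^ 2 - 1) ^ 2 := by field_simp; ring
    _ < 1 / 2 := by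
        rw [div_lt_iff₀ (by positivity)]
        linarith [sixteen_mul_cube_lt_sq_sub_one_sq hM17]

end Matrix

theorem stmt10_general (n : ℕ) (W : Matrix (Fin n) (Fin n) ℝ)
    (hsymm : W.IsSymm) (hint : ∀ i j, ∃ m : ℕ, W i j = m)
    (L : Matrix (Fin n) (Fin n) ℝ)
    (hL : L = Matrix.diagonal (fun i => ∑ j, W i j) - W)
    (M : ℝ) (hM : M = ∑ i, ∑ j, W i j) (hM17 : 17 ≤ M)
    (Q : ℕ) (hQpos : 0 < Q)
    (hQ : ∀ i, (M ^ 2 - 1) * (∑ j, W i j) ≤ (Q : ℝ))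
    (z : (Fin n → ℝ) → Fin n → ℝ)
    (hz : ∀ s, z s = ((1 + (Q : ℝ)⁻¹ • L)⁻¹).mulVec s) :
    (∀ s : Fin n → ℝ, (∀ i, s i = 1 ∨ s i = -1) →
      |z s ⬝ᵥ L.mulVec (z s) - s ⬝ᵥ L.mulVec s| < 1 / 2 ∧
        (round (z s ⬝ᵥ L.mulVec (z s)) : ℝ) = s ⬝ᵥ L.mulVec s) ∧
    (∀ s' : Fin n → ℝ, (∀ i, s' i = 1 ∨ s' i = -1) →
      (∀ s : Fin n → ℝ, (∀ i, s i = 1 ∨ s i = -1) →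
        z s ⬝ᵥ L.mulVec (z s) ≤ z s' ⬝ᵥ L.mulVec (z s')) →
      (∀ s : Fin n → ℝ, (∀ i, s i = 1 ∨ s i = -1) →
        s ⬝ᵥ L.mulVec s ≤ s' ⬝ᵥ L.mulVec s') ∧
        s' ⬝ᵥ L.mulVec s' = (round (z s' ⬝ᵥ L.mulVec (z s')) : ℝ)) := by
  obtain rfl : L = laplacian W := hL
  have hWℤ (i j : Fin n) : ∃ k : ℤ, W i j = k := by
    obtain ⟨m, hm⟩ := hint i j
    exact ⟨m, by simp [hm]⟩
  have hW₀ (i j : Fin n) : 0 ≤ W i j := by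
    obtain ⟨m, hm⟩ := hint i j
    exact hm ▸ m.cast_nonneg
  have hclose (s : Fin n → ℝ) (hs : ∀ i, s i = 1 ∨ s i = -1) :
      |z s ⬝ᵥ laplacian W *ᵥ z s - s ⬝ᵥ laplacian W *ᵥ s| < 1 / 2 :=
    abs_dotProduct_laplacian_mulVec_sub_lt_half hsymm hW₀ hM hM17 (by positivity) hQ
      (fun i => by rcases hs i with h | h <;> simp [h])
      (hz s ▸ inv_one_add_smul_laplacian_mulVec_add hsymm hW₀ (by positivity) s)
  have hintegral (s : Fin n → ℝ) (hs : ∀ i, s i = 1 ∨ s i = -1) :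
      ∃ k : ℤ, s ⬝ᵥ laplacian W *ᵥ s = k :=
    have hsℤ (i : Fin n) : ∃ k : ℤ, s i = k := (hs i).elim (⟨1, by simp [·]⟩) (⟨-1, by simp [·]⟩)
    exists_int_dotProduct_mulVec (exists_int_laplacian_apply hWℤ) hsℤ hsℤ
  have hround (s : Fin n → ℝ) (hs : ∀ i, s i = 1 ∨ s i = -1) :
      (round (z s ⬝ᵥ laplacian W *ᵥ z s) : ℝ) = s ⬝ᵥ laplacian W *ᵥ s := by
    obtain ⟨k, hk⟩ := hintegral s hs
    rw [hk, round_eq_of_abs_sub_lt_half (hk ▸ hclose s hs)]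
  refine ⟨fun s hs => ⟨hclose s hs, hround s hs⟩,
    fun s' hs' hmax => ⟨fun s hs => ?_, (hround s' hs').symm⟩⟩
  obtain ⟨k, hk⟩ := hintegral s hs
  obtain ⟨k', hk'⟩ := hintegral s' hs'
  rw [hk, hk']
  exact_mod_cast Int.le_of_abs_sub_lt_half (hk ▸ hclose s hs) (hk' ▸ hclose s' hs') (hmax s hs)

theorem stmt10 (n : ℕ) (W : Matrix (Fin n) (Fin n) ℝ)
    (hsymm : W.IsSymm) (hint : ∀ i j, ∃ m : ℕ, W i j = m) (hdiag : ∀ i, W i i = 0)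
    (L : Matrix (Fin n) (Fin n) ℝ)
    (hL : L = Matrix.diagonal (fun i => ∑ j, W i j) - W)
    (M : ℝ) (hM : M = ∑ i, ∑ j, W i j) (hM17 : 17 ≤ M)
    (Q : ℕ) (hQpos : 0 < Q)
    (hQ : ∀ i, (M ^ 2 - 1) * (∑ j, W i j) ≤ (Q : ℝ))
    (z : (Fin n → ℝ) → Fin n → ℝ)
    (hz : ∀ s, z s = ((1 + (Q : ℝ)⁻¹ • L)⁻¹).mulVec s) :
    (∀ s : Fin n → ℝ, (∀ i, s i = 1 ∨ s i = -1) →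
      |z s ⬝ᵥ L.mulVec (z s) - s ⬝ᵥ L.mulVec s| < 1 / 2 ∧
        (round (z s ⬝ᵥ L.mulVec (z s)) : ℝ) = s ⬝ᵥ L.mulVec s) ∧
    (∀ s' : Fin n → ℝ, (∀ i, s' i = 1 ∨ s' i = -1) →
      (∀ s : Fin n → ℝ, (∀ i, s i = 1 ∨ s i = -1) →
        z s ⬝ᵥ L.mulVec (z s) ≤ z s' ⬝ᵥ L.mulVec (z s')) →
      (∀ s : Fin n → ℝ, (∀ i, s i = 1 ∨ s i = -1) →
        s ⬝ᵥ L.mulVec s ≤ s' ⬝ᵥ L.mulVec s') ∧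
        s' ⬝ᵥ L.mulVec s' = (round (z s' ⬝ᵥ L.mulVec (z s')) : ℝ)) :=
  stmt10_general n W hsymm hint L hL M hM hM17 Q hQpos hQ z hz
end
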